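/- If $\{e_k\}_{k\ge 0}$ is a sequence of independent real random variables with mean zero and uniformly bounded moments of order $4\gamma$, and $\{f_i\}_{i\ge 0}$ is an absolutely summable real sequence, then the random variable $v_k = \sum_{i=0}^{\infty} f_i e_{k-i}$ satisfies $\sup_k \mathbb{E}[|v_k|^{4\gamma}] < \infty$. -/

import Mathlib

open MeasureTheory ProbabilityTheory Filter
open scoped ENNReal NNReal Topology

set_option maxHeartbeats 1000000

theorem stmt_0 {Ω : Type*} [MeasurableSpace Ω] (μ : Measure Ω) [IsProbabilityMeasure μ]
    (γ : ℕ) (hγ : 0 < γ)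
    (e : ℤ → Ω → ℝ) (he_meas : ∀ k, Measurable (e k))
    (he_indep : iIndepFun e μ)
    (he_mean : ∀ k, ∫ ω, e k ω ∂μ = 0)
    (Ce : ℝ≥0∞) (hCe : Ce ≠ ⊤)
    (he_mom : ∀ k, ∫⁻ ω, (‖e k ω‖₊ : ℝ≥0∞) ^ (4 * γ) ∂μ ≤ Ce)
    (f : ℕ → ℝ) (hf : Summable fun i => |f i|)
    (v : ℤ → Ω → ℝ) (hv : ∀ k ω, v k ω = ∑' i : ℕ, f i * e (k - (i : ℤ)) ω)
    (hconv : ∀ k, ∀ᵐ ω ∂μ, Summable fun i : ℕ => f i * e (k - (i : ℤ)) ω) :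
    ∃ C : ℝ≥0∞, C ≠ ⊤ ∧ ∀ k, ∫⁻ ω, (‖v k ω‖₊ : ℝ≥0∞) ^ (4 * γ) ∂μ ≤ C := by
  classical
  set p : ℝ≥0∞ := ((4 * γ : ℕ) : ℝ≥0∞) with hp_def
  have h4γ : (4 * γ : ℕ) ≠ 0 := by positivity
  have hp0 : p ≠ 0 := by simpa [hp_def] using h4γ
  have hpt : p ≠ ⊤ := by rw [hp_def]; exact ENNReal.natCast_ne_top _
  have hp1 : 1 ≤ p := by
    rw [hp_def]
    exact_mod_cast Nat.one_le_iff_ne_zero.mpr h4γ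
  have hptoReal : p.toReal = (4 * γ : ℕ) := by simp [hp_def]
  have hptoReal_pos : 0 < p.toReal := by
    rw [hptoReal]; exact_mod_cast Nat.pos_of_ne_zero h4γ
  set B : ℝ≥0∞ := Ce ^ (p.toReal)⁻¹ with hB_def
  have hBe : ∀ j, eLpNorm (e j) p μ ≤ B := by
    intro j
    rw [eLpNorm_eq_lintegral_rpow_enorm_toReal hp0 hpt, hB_def, one_div]
    refine ENNReal.rpow_le_rpow ?_ (by positivity)
    calc ∫⁻ ω, (‖e j ω‖₊ : ℝ≥0∞) ^ p.toReal ∂μ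
        = ∫⁻ ω, (‖e j ω‖₊ : ℝ≥0∞) ^ (4 * γ) ∂μ := by
          refine lintegral_congr fun ω => ?_
          rw [hptoReal, ENNReal.rpow_natCast]
      _ ≤ Ce := he_mom j
  set A : ℝ≥0∞ := (∑' i, (‖f i‖₊ : ℝ≥0∞)) * B with hA_def
  have hfsum : Summable fun i => ‖f i‖₊ := by
    rw [← NNReal.summable_coe]
    simpa [Real.norm_eq_abs] using hf
  have hA_ne_top : A ≠ ⊤ := by
    apply ENNReal.mul_ne_top
    · exact ENNReal.tsum_coe_ne_top_iff_summable.mpr hfsum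
    · exact ENNReal.rpow_ne_top_of_nonneg (by positivity) hCe
  refine ⟨A ^ (4 * γ), ENNReal.pow_ne_top hA_ne_top, fun k => ?_⟩
  set S : ℕ → Ω → ℝ := fun n ω => ∑ i ∈ Finset.range n, f i * e (k - (i : ℤ)) ω with hS_def
  have hS_meas : ∀ n, AEStronglyMeasurable (S n) μ := by
    intro n
    exact (Finset.measurable_sum _ fun i _ =>
      (measurable_const.mul (he_meas _))).aestronglyMeasurable
  have h_lim : ∀ᵐ ω ∂μ, Tendsto (fun n => S n ω) atTop (𝓝 (v k ω)) := by
    filter_upwards [hconv k] with ω hω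
    rw [hv k ω]
    exact hω.hasSum.tendsto_sum_nat
  set g : ℕ → Ω → ℝ := fun i ω => f i * e (k - (i : ℤ)) ω with hg_def
  have hg_meas : ∀ i, AEStronglyMeasurable (g i) μ := fun i =>
    (measurable_const.mul (he_meas _)).aestronglyMeasurable
  have hSA : ∀ n, eLpNorm (S n) p μ ≤ A := by
    intro n
    have hSg : S n = ∑ i ∈ Finset.range n, g i := by
      funext ω
      simp [hS_def, hg_def]
    calc eLpNorm (S n) p μ
        ≤ ∑ i ∈ Finset.range n, eLpNorm (g i) p μ := by
          rw [hSg]; exact eLpNorm_sum_le (fun i _ => hg_meas i) hp1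
      _ = ∑ i ∈ Finset.range n, (‖f i‖₊ : ℝ≥0∞) * eLpNorm (e (k - (i : ℤ))) p μ := by
          refine Finset.sum_congr rfl fun i _ => ?_
          have : g i = f i • e (k - (i : ℤ)) := by
            funext ω; simp [hg_def, smul_eq_mul]
          rw [this, eLpNorm_const_smul]; rfl
      _ ≤ ∑ i ∈ Finset.range n, (‖f i‖₊ : ℝ≥0∞) * B := by
          gcongr with i _
          exact hBe _
      _ ≤ (∑' i, (‖f i‖₊ : ℝ≥0∞)) * B := by
          rw [← Finset.sum_mul]
          gcongr
          exact ENNReal.sum_le_tsum _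
  have hvA : eLpNorm (v k) p μ ≤ A := by
    refine le_trans (Lp.eLpNorm_lim_le_liminf_eLpNorm hS_meas _ h_lim) ?_
    exact liminf_le_of_frequently_le (Frequently.of_forall hSA)
  rw [eLpNorm_eq_lintegral_rpow_enorm_toReal hp0 hpt] at hvA
  have key : ∫⁻ ω, (‖v k ω‖₊ : ℝ≥0∞) ^ p.toReal ∂μ ≤ A ^ p.toReal := by
    have := ENNReal.rpow_le_rpow hvA (le_of_lt hptoReal_pos)
    rwa [one_div, ENNReal.rpow_inv_rpow hptoReal_pos.ne'] at this
  calc ∫⁻ ω, (‖v k ω‖₊ : ℝ≥0∞) ^ (4 * γ) ∂μ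
      = ∫⁻ ω, (‖v k ω‖₊ : ℝ≥0∞) ^ p.toReal ∂μ := by
        refine lintegral_congr fun ω => ?_
        rw [hptoReal, ENNReal.rpow_natCast]
    _ ≤ A ^ p.toReal := key
    _ = A ^ (4 * γ) := by rw [hptoReal, ENNReal.rpow_natCast]
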